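/- Let φ : [a,b] → ℝ be C¹ with φ(a) = 0 and φ' > 0, let ϕ : [0,∞) → [0,∞) be convex and increasing with ϕ(0)=0, and let f : [a,b] → ℝ be C¹ with f(a)=0. Then for every x ∈ [a,b] with φ(x) > 0, ϕ(|f(x)|/φ(x)) ≤ (1/φ(x)) ∫ₐˣ φ'(t) ϕ(|f'(t)|/φ'(t)) dt. -/

import Mathlib

/-!
Since `f a = 0` we have `|f x| ≤ ∫ₐˣ |f'|`; as `ϕ` is increasing, it suffices to prove Jensen's
inequality for the probability measure `φ' t dt / φ x` on `[a, x]` applied to `|f'| / φ'`, whose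
mean is `(∫ₐˣ |f'|) / φ x`. Jensen's inequality follows by integrating a supporting line of `ϕ` at
the mean: at an interior point of `[0, ∞)` its slope is the left derivative of `ϕ`, and at the
endpoint `0` monotonicity makes the horizontal line supporting. Monotonicity also gives continuity
of `ϕ` at `0`, hence integrability of the right-hand side.
-/

open Set Filter Topology MeasureTheory

namespace ConvexOn

variable {ϕ : ℝ → ℝ} {a c : ℝ}

theorem continuousWithinAt_Ici_of_monotoneOn (hϕ : ConvexOn ℝ (Ici a) ϕ)
    (hmono : MonotoneOn ϕ (Ici a)) : ContinuousWithinAt ϕ (Ici a) a := by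
  set s := slope ϕ a (a + 1)
  have hupper : ∀ y ∈ Ioc a (a + 1), ϕ y ≤ ϕ a + (y - a) * s := by
    intro y ⟨hay, hy1⟩
    have hslope : slope ϕ a y ≤ s :=
      hϕ.slope_mono self_mem_Ici ⟨hay.le, hay.ne'⟩ ⟨by simp, by simp⟩ hy1
    have := sub_smul_slope ϕ a y
    simp only [smul_eq_mul, vsub_eq_sub] at this
    nlinarith
  have hline : Tendsto (fun y => ϕ a + (y - a) * s) (𝓝[Ici a] a) (𝓝 (ϕ a)) := by
    have : Continuous fun y => ϕ a + (y - a) * s := by fun_prop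
    simpa using (this.continuousWithinAt (s := Ici a) (x := a)).tendsto
  refine tendsto_of_tendsto_of_tendsto_of_le_of_le' tendsto_const_nhds hline ?_ ?_
  · filter_upwards [self_mem_nhdsWithin] with y hy using hmono self_mem_Ici hy hy
  · filter_upwards [self_mem_nhdsWithin,
      nhdsWithin_le_nhds (eventually_lt_nhds (lt_add_one a))] with y hy hy1
    rcases (mem_Ici.1 hy).eq_or_lt with rfl | hay
    · simp
    · exact hupper y ⟨hay, hy1.le⟩

theorem exists_supporting_line_of_monotoneOn (hϕ : ConvexOn ℝ (Ici a) ϕ)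
    (hmono : MonotoneOn ϕ (Ici a)) (hac : a ≤ c) :
    ∃ m, ∀ y ∈ Ici a, ϕ c + m * (y - c) ≤ ϕ y := by
  rcases hac.eq_or_lt with rfl | hac
  · exact ⟨0, fun y hy => by simpa using hmono self_mem_Ici hy hy⟩
  have hc : c ∈ interior (Ici a) := by rwa [interior_Ici]
  set m := derivWithin ϕ (Iio c) c
  have hslope_le : ∀ y ∈ Ici a, y < c → slope ϕ y c ≤ m := fun y hy hyc =>
    hϕ.slope_le_leftDeriv_of_mem_interior hy hc hyc
  have hle_slope : ∀ y ∈ Ici a, c < y → m ≤ slope ϕ c y := fun y hy hcy =>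
    (hϕ.leftDeriv_le_rightDeriv_of_mem_interior hc).trans
      (hϕ.rightDeriv_le_slope_of_mem_interior hc hy hcy)
  refine ⟨m, fun y hy => ?_⟩
  rcases lt_trichotomy y c with hyc | rfl | hcy
  · have hsec := sub_smul_slope ϕ y c
    simp only [smul_eq_mul, vsub_eq_sub] at hsec
    nlinarith [hslope_le y hy hyc]
  · simp
  · have hsec := sub_smul_slope ϕ c y
    simp only [smul_eq_mul, vsub_eq_sub] at hsec
    nlinarith [hle_slope y hy hcy]

theorem continuousOn_Ici_of_monotoneOn (hϕ : ConvexOn ℝ (Ici a) ϕ)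
    (hmono : MonotoneOn ϕ (Ici a)) : ContinuousOn ϕ (Ici a) :=
  hϕ.continuousOn_Ici (hϕ.continuousWithinAt_Ici_of_monotoneOn hmono)

theorem intervalIntegral_mul_map_div_le (hϕ : ConvexOn ℝ (Ici 0) ϕ)
    (hmono : MonotoneOn ϕ (Ici 0)) {w u : ℝ → ℝ} {x : ℝ} (hax : a < x)
    (hw : ContinuousOn w (Icc a x)) (hw_pos : ∀ t ∈ Icc a x, 0 < w t)
    (hu : ContinuousOn u (Icc a x)) (hu_nonneg : ∀ t ∈ Icc a x, 0 ≤ u t) :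
    (∫ t in a..x, w t) * ϕ ((∫ t in a..x, u t) / ∫ t in a..x, w t) ≤
      ∫ t in a..x, w t * ϕ (u t / w t) := by
  set W := ∫ t in a..x, w t
  set U := ∫ t in a..x, u t
  have hw_int : IntervalIntegrable w volume a x := hw.intervalIntegrable_of_Icc hax.le
  have hu_int : IntervalIntegrable u volume a x := hu.intervalIntegrable_of_Icc hax.le
  have hW : 0 < W := intervalIntegral.intervalIntegral_pos_of_pos_on hw_int
    (fun t ht => hw_pos t (Ioo_subset_Icc_self ht)) hax
  have hratio : MapsTo (fun t => u t / w t) (Icc a x) (Ici 0) := fun t ht =>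
    div_nonneg (hu_nonneg t ht) (hw_pos t ht).le
  have hrhs_int : IntervalIntegrable (fun t => w t * ϕ (u t / w t)) volume a x :=
    (hw.mul ((hϕ.continuousOn_Ici_of_monotoneOn hmono).comp
      (hu.div hw fun t ht => (hw_pos t ht).ne') hratio)).intervalIntegrable_of_Icc hax.le
  obtain ⟨m, hm⟩ := hϕ.exists_supporting_line_of_monotoneOn hmono
    (div_nonneg (intervalIntegral.integral_nonneg hax.le hu_nonneg) hW.le : 0 ≤ U / W)
  have hline : ∀ t ∈ Icc a x,
      (ϕ (U / W) - m * (U / W)) * w t + m * u t ≤ w t * ϕ (u t / w t) := by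
    intro t ht
    have hwt := hw_pos t ht
    calc (ϕ (U / W) - m * (U / W)) * w t + m * u t
        = w t * (ϕ (U / W) + m * (u t / w t - U / W)) := by field_simp; ring
      _ ≤ w t * ϕ (u t / w t) := by gcongr; exact hm _ (hratio ht)
  calc W * ϕ (U / W) = ∫ t in a..x, (ϕ (U / W) - m * (U / W)) * w t + m * u t := by
        rw [intervalIntegral.integral_add (hw_int.const_mul _) (hu_int.const_mul _),
          intervalIntegral.integral_const_mul, intervalIntegral.integral_const_mul]
        field_simp
        ring
    _ ≤ ∫ t in a..x, w t * ϕ (u t / w t) :=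
        intervalIntegral.integral_mono_on hax.le
          ((hw_int.const_mul _).add (hu_int.const_mul _)) hrhs_int hline

end ConvexOn

theorem intervalIntegral.integral_eq_of_hasDerivAt_of_eq_zero {F F' : ℝ → ℝ} {a b x : ℝ}
    (hF : ∀ t ∈ Icc a b, HasDerivAt F (F' t) t) (hF' : ContinuousOn F' (Icc a b))
    (hFa : F a = 0) (hx : x ∈ Icc a b) : ∫ t in a..x, F' t = F x := by
  have hsub : uIcc a x ⊆ Icc a b := by
    rw [uIcc_of_le hx.1]; exact Icc_subset_Icc_right hx.2
  rw [intervalIntegral.integral_eq_sub_of_hasDerivAt (fun t ht => hF t (hsub ht))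
    ((hF'.mono hsub).intervalIntegrable), hFa, sub_zero]

theorem jensen_key_inequality_general (a b : ℝ)
    (φ φ' : ℝ → ℝ)
    (hφ : ∀ x ∈ Set.Icc a b, HasDerivAt φ (φ' x) x)
    (hφ'cont : ContinuousOn φ' (Set.Icc a b))
    (hφa : φ a = 0)
    (hφ'pos : ∀ x ∈ Set.Icc a b, 0 < φ' x)
    (ϕ : ℝ → ℝ)
    (hϕconv : ConvexOn ℝ (Set.Ici (0 : ℝ)) ϕ)
    (hϕmono : MonotoneOn ϕ (Set.Ici (0 : ℝ)))
    (f f' : ℝ → ℝ)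
    (hf : ∀ x ∈ Set.Icc a b, HasDerivAt f (f' x) x)
    (hf'cont : ContinuousOn f' (Set.Icc a b))
    (hfa : f a = 0) :
    ∀ x ∈ Set.Icc a b, 0 < φ x →
      ϕ (|f x| / φ x) ≤ (1 / φ x) * ∫ t in a..x, φ' t * ϕ (|f' t| / φ' t) := by
  intro x hx hφx
  have hax : a < x := hx.1.lt_of_ne (by rintro rfl; exact hφx.ne' hφa)
  have hsub : Icc a x ⊆ Icc a b := Icc_subset_Icc_right hx.2
  have hφx_eq := intervalIntegral.integral_eq_of_hasDerivAt_of_eq_zero hφ hφ'cont hφa hx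
  have hfx_le : |f x| ≤ ∫ t in a..x, |f' t| := by
    rw [← intervalIntegral.integral_eq_of_hasDerivAt_of_eq_zero hf hf'cont hfa hx]
    exact intervalIntegral.abs_integral_le_integral_abs hax.le
  have hjensen := hϕconv.intervalIntegral_mul_map_div_le hϕmono hax (hφ'cont.mono hsub)
    (fun t ht => hφ'pos t (hsub ht)) (hf'cont.mono hsub).abs (fun t _ => abs_nonneg (f' t))
  rw [hφx_eq] at hjensen
  calc ϕ (|f x| / φ x) ≤ ϕ ((∫ t in a..x, |f' t|) / φ x) :=
        hϕmono (div_nonneg (abs_nonneg _) hφx.le)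
          (div_nonneg (intervalIntegral.integral_nonneg hax.le fun t _ => abs_nonneg _) hφx.le)
          (div_le_div_of_nonneg_right hfx_le hφx.le)
    _ = (1 / φ x) * (φ x * ϕ ((∫ t in a..x, |f' t|) / φ x)) := by field_simp
    _ ≤ (1 / φ x) * ∫ t in a..x, φ' t * ϕ (|f' t| / φ' t) := by gcongr

/-- Jensen-type key inequality in the proof of Theorem 3.20 (one-dimensional real case):
if `φ` is C¹ with `φ a = 0`, `φ' > 0`, `ϕ` is convex increasing with `ϕ 0 = 0`, and
`f` is C¹ with `f a = 0`, then for every `x ∈ [a,b]` with `φ x > 0`,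
`ϕ (|f x| / φ x) ≤ (1 / φ x) ∫ₐˣ φ' t * ϕ (|f' t| / φ' t) dt`. -/
theorem jensen_key_inequality (a b : ℝ) (hab : a < b)
    (φ φ' : ℝ → ℝ)
    (hφ : ∀ x ∈ Set.Icc a b, HasDerivAt φ (φ' x) x)
    (hφ'cont : ContinuousOn φ' (Set.Icc a b))
    (hφa : φ a = 0)
    (hφ'pos : ∀ x ∈ Set.Icc a b, 0 < φ' x)
    (ϕ : ℝ → ℝ)
    (hϕconv : ConvexOn ℝ (Set.Ici (0 : ℝ)) ϕ)
    (hϕmono : MonotoneOn ϕ (Set.Ici (0 : ℝ)))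
    (hϕ0 : ϕ 0 = 0)
    (f f' : ℝ → ℝ)
    (hf : ∀ x ∈ Set.Icc a b, HasDerivAt f (f' x) x)
    (hf'cont : ContinuousOn f' (Set.Icc a b))
    (hfa : f a = 0) :
    ∀ x ∈ Set.Icc a b, 0 < φ x →
      ϕ (|f x| / φ x) ≤ (1 / φ x) * ∫ t in a..x, φ' t * ϕ (|f' t| / φ' t) :=
  jensen_key_inequality_general a b φ φ' hφ hφ'cont hφa hφ'pos ϕ hϕconv hϕmono f f' hf hf'cont hfa
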